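/- arXiv:2102.00987 — 2 statements merged into one kernel-verified Lean document; each statement's English description precedes it below -/
import Mathlib

section
/- Let H(s) = (1−s)H₀ + sH₁ (so Ḣ = H₁ − H₀ and Ḧ = 0), with smooth orthonormal eigenbasis |E_j(s)⟩ and simple eigenvalues E₀(s) < E₁(s) < E₂(s) ≤ ⋯ near s*. If the gap Δ(s) = E₁(s) − E₀(s) has a critical point at s* (Δ'(s*) = 0) and moreover E₀''(s*) + E₁''(s*) = 0, then for every j ≥ 2: ⟨E₀(s*)|Ḣ|E_j(s*)⟩ = 0 and ⟨E₁(s*)|Ḣ|E_j(s*)⟩ = 0. -/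
open Matrix Finset


lemma auxBilin (n : ℕ) (M : Matrix (Fin n) (Fin n) ℝ)
    (v w : ℝ → (Fin n → ℝ)) (v' w' : Fin n → ℝ) (s : ℝ)
    (hv : ∀ k, HasDerivAt (fun u => v u k) (v' k) s)
    (hw : ∀ k, HasDerivAt (fun u => w u k) (w' k) s) :
    HasDerivAt (fun u => v u ⬝ᵥ (M *ᵥ w u))
      (v' ⬝ᵥ (M *ᵥ w s) + v s ⬝ᵥ (M *ᵥ w')) s := by
  have key : ∀ u, v u ⬝ᵥ (M *ᵥ w u) = ∑ k, ∑ l, v u k * (M k l * w u l) := by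
    intro u; simp [dotProduct, Matrix.mulVec, Finset.mul_sum]
  have h : HasDerivAt (fun u => ∑ k, ∑ l, v u k * (M k l * w u l))
      (∑ k, ∑ l, (v' k * (M k l * w s l) + v s k * (M k l * w' l))) s := by
    refine HasDerivAt.fun_sum fun k _ => HasDerivAt.fun_sum fun l _ => ?_
    simpa using (hv k).fun_mul ((hw l).const_mul (M k l))
  have heq : (∑ k, ∑ l, (v' k * (M k l * w s l) + v s k * (M k l * w' l)))
      = v' ⬝ᵥ (M *ᵥ w s) + v s ⬝ᵥ (M *ᵥ w') := by
    simp [dotProduct, Matrix.mulVec, Finset.mul_sum, Finset.sum_add_distrib]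
  rw [show (fun u => v u ⬝ᵥ (M *ᵥ w u)) = fun u => ∑ k, ∑ l, v u k * (M k l * w u l) from funext key, ← heq]
  exact h

lemma auxQuad (n : ℕ) (H0 H1 : Matrix (Fin n) (Fin n) ℝ)
    (H : ℝ → Matrix (Fin n) (Fin n) ℝ)
    (hHdef : ∀ s, H s = (1 - s) • H0 + s • H1)
    (v w : ℝ → (Fin n → ℝ)) (v' w' : Fin n → ℝ) (s : ℝ)
    (hv : ∀ k, HasDerivAt (fun u => v u k) (v' k) s)
    (hw : ∀ k, HasDerivAt (fun u => w u k) (w' k) s) :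
    HasDerivAt (fun u => v u ⬝ᵥ (H u *ᵥ w u))
      (v' ⬝ᵥ (H s *ᵥ w s) + v s ⬝ᵥ ((H1 - H0) *ᵥ w s) + v s ⬝ᵥ (H s *ᵥ w')) s := by
  have key : ∀ u, v u ⬝ᵥ (H u *ᵥ w u)
      = ∑ k, ∑ l, v u k * (((1-u) * H0 k l + u * H1 k l) * w u l) := by
    intro u; simp [dotProduct, Matrix.mulVec, hHdef, Matrix.add_apply, Matrix.smul_apply,
      smul_eq_mul, Finset.mul_sum]
  have h : HasDerivAt (fun u => ∑ k, ∑ l, v u k * (((1-u) * H0 k l + u * H1 k l) * w u l))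
      (∑ k, ∑ l, (v' k * (((1-s) * H0 k l + s * H1 k l) * w s l)
        + v s k * ((H1 k l - H0 k l) * w s l + ((1-s) * H0 k l + s * H1 k l) * w' l))) s := by
    refine HasDerivAt.fun_sum fun k _ => HasDerivAt.fun_sum fun l _ => ?_
    have hc : HasDerivAt (fun u => (1-u) * H0 k l + u * H1 k l) (H1 k l - H0 k l) s := by
      have := (((hasDerivAt_id s).const_sub 1).mul_const (H0 k l)).fun_add
        ((hasDerivAt_id s).mul_const (H1 k l))
      rw [show H1 k l - H0 k l = -1 * H0 k l + 1 * H1 k l by ring]; exact this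
    exact (hv k).fun_mul (hc.fun_mul (hw l))
  have heq : (∑ k, ∑ l, (v' k * (((1-s) * H0 k l + s * H1 k l) * w s l)
        + v s k * ((H1 k l - H0 k l) * w s l + ((1-s) * H0 k l + s * H1 k l) * w' l)))
      = v' ⬝ᵥ (H s *ᵥ w s) + v s ⬝ᵥ ((H1 - H0) *ᵥ w s) + v s ⬝ᵥ (H s *ᵥ w') := by
    simp only [dotProduct, Matrix.mulVec, hHdef, Matrix.add_apply, Matrix.smul_apply,
      Matrix.sub_apply, smul_eq_mul, Finset.mul_sum, ← Finset.sum_add_distrib]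
    refine Finset.sum_congr rfl fun k _ => ?_
    refine Finset.sum_congr rfl fun l _ => ?_
    ring
  rw [show (fun u => v u ⬝ᵥ (H u *ᵥ w u)) = _ from funext key, ← heq]
  exact h

/-- Anti-crossing theorem, first part: for the affine family H(s) = (1−s)H₀ + sH₁
with smooth orthonormal eigenbasis and simple spectrum near s*, if the gap
Δ = E₁ − E₀ is stationary at s* and E₀''(s*) + E₁''(s*) = 0, then the matrix
elements ⟨E₀(s*)|Ḣ|E_j(s*)⟩ and ⟨E₁(s*)|Ḣ|E_j(s*)⟩ vanish for every j ≥ 2. -/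
theorem stmt_11 (n : ℕ) (H0 H1 : Matrix (Fin n) (Fin n) ℝ)
    (hH0 : H0.IsSymm) (hH1 : H1.IsSymm)
    (H : ℝ → Matrix (Fin n) (Fin n) ℝ)
    (hHdef : ∀ s, H s = (1 - s) • H0 + s • H1)
    (v : Fin n → ℝ → (Fin n → ℝ)) (v' : Fin n → ℝ → (Fin n → ℝ))
    (lam lam' : Fin n → ℝ → ℝ) (lam'' : Fin n → ℝ)
    (sstar : ℝ) (hs0 : 0 < sstar) (hs1 : sstar < 1)
    (hv : ∀ i s k, HasDerivAt (fun u => v i u k) (v' i s k) s)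
    (heig : ∀ i s, H s *ᵥ v i s = lam i s • v i s)
    (horth : ∀ s i j, v i s ⬝ᵥ v j s = if i = j then 1 else 0)
    (hlam : ∀ i s, HasDerivAt (lam i) (lam' i s) s)
    (hlam'' : ∀ i, HasDerivAt (lam' i) (lam'' i) sstar)
    (i0 i1 : Fin n) (h01 : i0 ≠ i1)
    (hordered : lam i0 sstar < lam i1 sstar)
    (hhigh : ∀ j, j ≠ i0 → j ≠ i1 → lam i1 sstar < lam j sstar)
    (hsimple : ∀ i j, i ≠ j → lam i sstar ≠ lam j sstar)
    (hstat : lam' i1 sstar = lam' i0 sstar)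
    (hsecond : lam'' i0 + lam'' i1 = 0) :
    ∀ j, j ≠ i0 → j ≠ i1 →
      v i0 sstar ⬝ᵥ ((H1 - H0) *ᵥ v j sstar) = 0 ∧
      v i1 sstar ⬝ᵥ ((H1 - H0) *ᵥ v j sstar) = 0 := by
  -- symmetry facts
  have hAsymm : (H1 - H0)ᵀ = H1 - H0 := by
    rw [Matrix.transpose_sub]; rw [Matrix.IsSymm] at hH0 hH1; rw [hH0, hH1]
  have hHsymm : ∀ s, (H s)ᵀ = H s := by
    intro s
    rw [Matrix.IsSymm] at hH0 hH1
    rw [hHdef, Matrix.transpose_add, Matrix.transpose_smul, Matrix.transpose_smul, hH0, hH1]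
  have symm_dot : ∀ (M : Matrix (Fin n) (Fin n) ℝ), Mᵀ = M →
      ∀ u w : Fin n → ℝ, u ⬝ᵥ (M *ᵥ w) = (M *ᵥ u) ⬝ᵥ w := by
    intro M h u w
    rw [Matrix.dotProduct_mulVec, ← Matrix.mulVec_transpose, h]
  -- derivative of orthonormality
  have horthd : ∀ s (i j : Fin n), v' i s ⬝ᵥ v j s + v i s ⬝ᵥ v' j s = 0 := by
    intro s i j
    have hd := auxBilin n 1 (v i) (v j) (v' i s) (v' j s) s (hv i s) (hv j s)
    simp only [Matrix.one_mulVec] at hd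
    have hc : HasDerivAt (fun u => v i u ⬝ᵥ v j u) 0 s := by
      rw [show (fun u => v i u ⬝ᵥ v j u) = fun _ => (if i = j then (1:ℝ) else 0) from
        funext fun u => horth u i j]
      exact hasDerivAt_const _ _
    exact hd.unique hc
  -- Hellmann–Feynman: lam' i s = ⟨v i, (H1-H0) v i⟩
  have hlamd : ∀ (i : Fin n) s, lam' i s = v i s ⬝ᵥ ((H1 - H0) *ᵥ v i s) := by
    intro i s
    have hq := auxQuad n H0 H1 H hHdef (v i) (v i) (v' i s) (v' i s) s (hv i s) (hv i s)
    have hfun : (fun u => v i u ⬝ᵥ (H u *ᵥ v i u)) = lam i := by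
      funext u
      rw [heig, dotProduct_smul, horth]
      simp
    rw [hfun] at hq
    have h2 := hq.unique (hlam i s)
    have t1 : v' i s ⬝ᵥ (H s *ᵥ v i s) = lam i s * (v' i s ⬝ᵥ v i s) := by
      rw [heig, dotProduct_smul]; simp
    have t3 : v i s ⬝ᵥ (H s *ᵥ v' i s) = lam i s * (v i s ⬝ᵥ v' i s) := by
      rw [symm_dot _ (hHsymm s), heig, smul_dotProduct]; simp
    rw [t1, t3] at h2
    have hO := horthd s i i
    linear_combination lam i s * hO - h2
  -- second derivative formula
  have hlamdd : ∀ (i : Fin n), lam'' i = 2 * (v' i sstar ⬝ᵥ ((H1 - H0) *ᵥ v i sstar)) := by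
    intro i
    have hb := auxBilin n (H1 - H0) (v i) (v i) (v' i sstar) (v' i sstar) sstar
      (hv i sstar) (hv i sstar)
    rw [show (fun u => v i u ⬝ᵥ ((H1 - H0) *ᵥ v i u)) = lam' i from
      funext fun u => (hlamd i u).symm] at hb
    have h2 := hb.unique (hlam'' i)
    have : v i sstar ⬝ᵥ ((H1 - H0) *ᵥ v' i sstar)
        = v' i sstar ⬝ᵥ ((H1 - H0) *ᵥ v i sstar) := by
      rw [symm_dot _ hAsymm, dotProduct_comm]
    rw [this] at h2
    linarith
  -- Parseval / completeness
  have hpar : ∀ w z : Fin n → ℝ, w ⬝ᵥ z = ∑ j, (v j sstar ⬝ᵥ w) * (v j sstar ⬝ᵥ z) := by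
    intro w z
    set P : Matrix (Fin n) (Fin n) ℝ := Matrix.of fun j k => v j sstar k with hP
    have hPP : P * Pᵀ = 1 := by
      ext i j
      simpa [hP, Matrix.mul_apply, Matrix.one_apply, dotProduct] using horth sstar i j
    have hPtP : Pᵀ * P = 1 := mul_eq_one_comm.mp hPP
    have h1 : w = Pᵀ *ᵥ (P *ᵥ w) := by rw [Matrix.mulVec_mulVec, hPtP, Matrix.one_mulVec]
    calc w ⬝ᵥ z = (Pᵀ *ᵥ (P *ᵥ w)) ⬝ᵥ z := by rw [← h1]
      _ = (P *ᵥ w) ⬝ᵥ (P *ᵥ z) := by rw [Matrix.mulVec_transpose, ← Matrix.dotProduct_mulVec]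
      _ = ∑ j, (v j sstar ⬝ᵥ w) * (v j sstar ⬝ᵥ z) := by
          simp [hP, Matrix.mulVec, dotProduct]
  -- abbreviations
  set b : Fin n → Fin n → ℝ := fun j i => v j sstar ⬝ᵥ v' i sstar with hb
  set c : Fin n → Fin n → ℝ := fun j i => v j sstar ⬝ᵥ ((H1 - H0) *ᵥ v i sstar) with hc
  have hlamsum : ∀ (i : Fin n), lam'' i = 2 * ∑ j, b j i * c j i := by
    intro i
    rw [hlamdd i, hpar (v' i sstar) ((H1 - H0) *ᵥ v i sstar)]
  -- off-diagonal matrix elements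
  have hoffd : ∀ (i j : Fin n), j ≠ i → c j i = (lam i sstar - lam j sstar) * b j i := by
    intro i j hji
    have hq := auxQuad n H0 H1 H hHdef (v j) (v i) (v' j sstar) (v' i sstar) sstar
      (hv j sstar) (hv i sstar)
    have hfun : (fun u => v j u ⬝ᵥ (H u *ᵥ v i u)) = fun _ => (0:ℝ) := by
      funext u
      rw [heig, dotProduct_smul, horth]
      simp [hji]
    rw [hfun] at hq
    have hE := hq.unique (hasDerivAt_const sstar 0)
    have t1 : v' j sstar ⬝ᵥ (H sstar *ᵥ v i sstar)
        = lam i sstar * (v' j sstar ⬝ᵥ v i sstar) := by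
      rw [heig, dotProduct_smul]; simp
    have t3 : v j sstar ⬝ᵥ (H sstar *ᵥ v' i sstar)
        = lam j sstar * (v j sstar ⬝ᵥ v' i sstar) := by
      rw [symm_dot _ (hHsymm sstar), heig, smul_dotProduct]; simp
    rw [t1, t3] at hE
    have hO := horthd sstar j i
    simp only [hb, hc]
    linear_combination hE - lam i sstar * hO
  -- diagonal b vanishes
  have hbdiag : ∀ (i : Fin n), b i i = 0 := by
    intro i
    have hO := horthd sstar i i
    have : v' i sstar ⬝ᵥ v i sstar = v i sstar ⬝ᵥ v' i sstar := dotProduct_comm _ _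
    simp only [hb]
    linarith [hO, this.symm ▸ hO]
  -- antisymmetry of b across i0, i1
  have hbanti : b i0 i1 = - b i1 i0 := by
    have hO := horthd sstar i1 i0
    have hcm : v' i1 sstar ⬝ᵥ v i0 sstar = v i0 sstar ⬝ᵥ v' i1 sstar := dotProduct_comm _ _
    simp only [hb]
    linarith [hO, hcm]
  -- the total sum
  have hsum : ∑ j, (b j i0 * c j i0 + b j i1 * c j i1) = 0 := by
    have h2 : 2 * ∑ j, b j i0 * c j i0 + 2 * ∑ j, b j i1 * c j i1 = 0 := by
      rw [← hlamsum i0, ← hlamsum i1]; exact hsecond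
    rw [Finset.sum_add_distrib]
    linarith
  -- split off i0, i1
  set T : Finset (Fin n) := univ \ {i0, i1} with hT
  have hsplit : ∑ j ∈ T, (b j i0 * c j i0 + b j i1 * c j i1)
      + ∑ j ∈ ({i0, i1} : Finset (Fin n)), (b j i0 * c j i0 + b j i1 * c j i1)
      = ∑ j, (b j i0 * c j i0 + b j i1 * c j i1) :=
    Finset.sum_sdiff (Finset.subset_univ _)
  have hpair : ∑ j ∈ ({i0, i1} : Finset (Fin n)), (b j i0 * c j i0 + b j i1 * c j i1)
      = (b i0 i0 * c i0 i0 + b i0 i1 * c i0 i1) + (b i1 i0 * c i1 i0 + b i1 i1 * c i1 i1) :=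
    Finset.sum_pair h01
  have hcross : (b i0 i0 * c i0 i0 + b i0 i1 * c i0 i1)
      + (b i1 i0 * c i1 i0 + b i1 i1 * c i1 i1) = 0 := by
    rw [hbdiag i0, hbdiag i1, hoffd i1 i0 h01, hoffd i0 i1 h01.symm, hbanti]
    ring
  have hTsum : ∑ j ∈ T, (b j i0 * c j i0 + b j i1 * c j i1) = 0 := by
    rw [hpair, hcross] at hsplit
    rw [hsum] at hsplit
    linarith
  -- rewrite terms on T via hoffd and show nonpositivity
  have hTform : ∀ j ∈ T, b j i0 * c j i0 + b j i1 * c j i1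
      = (lam i0 sstar - lam j sstar) * (b j i0)^2
        + (lam i1 sstar - lam j sstar) * (b j i1)^2 := by
    intro j hj
    rw [hT, Finset.mem_sdiff, Finset.mem_insert, Finset.mem_singleton] at hj
    push_neg at hj
    obtain ⟨-, hj0, hj1⟩ := hj
    rw [hoffd i0 j hj0, hoffd i1 j hj1]
    ring
  have hnonpos : ∀ j ∈ T, b j i0 * c j i0 + b j i1 * c j i1 ≤ 0 := by
    intro j hj
    have hjm := hj
    rw [hT, Finset.mem_sdiff, Finset.mem_insert, Finset.mem_singleton] at hjm
    push_neg at hjm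
    obtain ⟨-, hj0, hj1⟩ := hjm
    have hgt := hhigh j hj0 hj1
    rw [hTform j hj]
    nlinarith [sq_nonneg (b j i0), sq_nonneg (b j i1)]
  have hzero : ∀ j ∈ T, b j i0 * c j i0 + b j i1 * c j i1 = 0 :=
    fun j hj => (Finset.sum_eq_zero_iff_of_nonpos hnonpos).mp hTsum j hj
  -- conclude
  intro j hj0 hj1
  have hjT : j ∈ T := by
    rw [hT, Finset.mem_sdiff, Finset.mem_insert, Finset.mem_singleton]
    exact ⟨Finset.mem_univ j, by push_neg; exact ⟨hj0, hj1⟩⟩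
  have hz := hzero j hjT
  rw [hTform j hjT] at hz
  have hgt := hhigh j hj0 hj1
  have ha0 : lam i0 sstar - lam j sstar < 0 := by linarith
  have ha1 : lam i1 sstar - lam j sstar < 0 := by linarith
  have ht0 : (lam i0 sstar - lam j sstar) * (b j i0)^2 ≤ 0 := by
    nlinarith [sq_nonneg (b j i0)]
  have ht1 : (lam i1 sstar - lam j sstar) * (b j i1)^2 ≤ 0 := by
    nlinarith [sq_nonneg (b j i1)]
  have he0 : (lam i0 sstar - lam j sstar) * (b j i0)^2 = 0 := by linarith
  have he1 : (lam i1 sstar - lam j sstar) * (b j i1)^2 = 0 := by linarith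
  have hb0 : b j i0 = 0 := by
    rcases mul_eq_zero.mp he0 with h | h
    · exact absurd h ha0.ne
    · exact sq_eq_zero_iff.mp h
  have hb1 : b j i1 = 0 := by
    rcases mul_eq_zero.mp he1 with h | h
    · exact absurd h ha1.ne
    · exact sq_eq_zero_iff.mp h
  have hc0 : c j i0 = 0 := by rw [hoffd i0 j hj0, hb0, mul_zero]
  have hc1 : c j i1 = 0 := by rw [hoffd i1 j hj1, hb1, mul_zero]
  constructor
  · rw [symm_dot _ hAsymm (v i0 sstar) (v j sstar), dotProduct_comm]
    exact hc0
  · rw [symm_dot _ hAsymm (v i1 sstar) (v j sstar), dotProduct_comm]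
    exact hc1
end

section
/- Under the hypotheses of the anti-crossing theorem (H(s) = (1−s)H₀ + sH₁, simple spectrum near s*, Δ'(s*) = 0 and E₀''(s*) + E₁''(s*) = 0), the derivatives of the two lowest eigenvectors at s* satisfy d/ds|E₀(s*)⟩ = −β|E₁(s*)⟩ and d/ds|E₁(s*)⟩ = β|E₀(s*)⟩, where β = ⟨E₀(s*)|Ḣ|E₁(s*)⟩ / (E₁(s*) − E₀(s*)). -/
open Matrix Finset


lemma hasDerivAt_dot {n : ℕ} {f g : ℝ → Fin n → ℝ} {f' g' : Fin n → ℝ} {s : ℝ}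
    (hf : ∀ k, HasDerivAt (fun u => f u k) (f' k) s)
    (hg : ∀ k, HasDerivAt (fun u => g u k) (g' k) s) :
    HasDerivAt (fun u => f u ⬝ᵥ g u) (f' ⬝ᵥ g s + f s ⬝ᵥ g') s := by
  have h : HasDerivAt (fun u => ∑ k, f u k * g u k)
      (∑ k, (f' k * g s k + f s k * g' k)) s :=
    HasDerivAt.fun_sum fun k _ => (hf k).mul (hg k)
  simpa [dotProduct, Finset.sum_add_distrib] using h

lemma hasDerivAt_mulVec {n : ℕ} {A : ℝ → Matrix (Fin n) (Fin n) ℝ}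
    {A' : Matrix (Fin n) (Fin n) ℝ} {g : ℝ → Fin n → ℝ} {g' : Fin n → ℝ} {s : ℝ}
    (hA : ∀ j k, HasDerivAt (fun u => A u j k) (A' j k) s)
    (hg : ∀ k, HasDerivAt (fun u => g u k) (g' k) s) (k : Fin n) :
    HasDerivAt (fun u => (A u *ᵥ g u) k) ((A' *ᵥ g s + A s *ᵥ g') k) s := by
  have h : HasDerivAt (fun u => ∑ l, A u k l * g u l)
      (∑ l, (A' k l * g s l + A s k l * g' l)) s :=
    HasDerivAt.fun_sum fun l _ => (hA k l).mul (hg l)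
  simpa [Matrix.mulVec, dotProduct, Finset.sum_add_distrib] using h

lemma symm_dot {n : ℕ} {A : Matrix (Fin n) (Fin n) ℝ} (hA : A.IsSymm) (x y : Fin n → ℝ) :
    x ⬝ᵥ (A *ᵥ y) = (A *ᵥ x) ⬝ᵥ y := by
  rw [dotProduct_mulVec, ← Matrix.mulVec_transpose, hA.eq]

/-- Anti-crossing theorem: under the anti-crossing conditions at s* for the affine
family H(s) = (1−s)H₀ + sH₁, the derivatives of the two lowest eigenvectors satisfy
d/ds|E₀(s*)⟩ = −β|E₁(s*)⟩ and d/ds|E₁(s*)⟩ = β|E₀(s*)⟩ with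
β = ⟨E₀(s*)|Ḣ|E₁(s*)⟩/(E₁(s*) − E₀(s*)). -/
theorem stmt_12 (n : ℕ) (H0 H1 : Matrix (Fin n) (Fin n) ℝ)
    (hH0 : H0.IsSymm) (hH1 : H1.IsSymm)
    (H : ℝ → Matrix (Fin n) (Fin n) ℝ)
    (hHdef : ∀ s, H s = (1 - s) • H0 + s • H1)
    (v : Fin n → ℝ → (Fin n → ℝ)) (v' : Fin n → ℝ → (Fin n → ℝ))
    (lam lam' : Fin n → ℝ → ℝ) (lam'' : Fin n → ℝ)
    (sstar : ℝ) (hs0 : 0 < sstar) (hs1 : sstar < 1)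
    (hv : ∀ i s k, HasDerivAt (fun u => v i u k) (v' i s k) s)
    (heig : ∀ i s, H s *ᵥ v i s = lam i s • v i s)
    (horth : ∀ s i j, v i s ⬝ᵥ v j s = if i = j then 1 else 0)
    (hlam : ∀ i s, HasDerivAt (lam i) (lam' i s) s)
    (hlam'' : ∀ i, HasDerivAt (lam' i) (lam'' i) sstar)
    (i0 i1 : Fin n) (h01 : i0 ≠ i1)
    (hordered : lam i0 sstar < lam i1 sstar)
    (hhigh : ∀ j, j ≠ i0 → j ≠ i1 → lam i1 sstar < lam j sstar)
    (hsimple : ∀ i j, i ≠ j → lam i sstar ≠ lam j sstar)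
    (hstat : lam' i1 sstar = lam' i0 sstar)
    (hsecond : lam'' i0 + lam'' i1 = 0)
    (β : ℝ)
    (hβ : β = (v i0 sstar ⬝ᵥ ((H1 - H0) *ᵥ v i1 sstar))
              / (lam i1 sstar - lam i0 sstar)) :
    v' i0 sstar = (-β) • v i1 sstar ∧ v' i1 sstar = β • v i0 sstar := by
  -- symmetry of H(s) and of Ḣ = H1 - H0
  have hHds : (H1 - H0).IsSymm := by
    simp [Matrix.IsSymm, Matrix.transpose_sub, hH0.eq, hH1.eq]
  have hHsymm : ∀ s, (H s).IsSymm := by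
    intro s
    simp [hHdef s, Matrix.IsSymm, Matrix.transpose_add, Matrix.transpose_smul, hH0.eq, hH1.eq]
  -- entrywise derivative of H
  have hent : ∀ (s : ℝ) (j k : Fin n), HasDerivAt (fun u => H u j k) ((H1 - H0) j k) s := by
    intro s j k
    have h : HasDerivAt (fun u : ℝ => (1 - u) * H0 j k + u * H1 j k)
        ((-1) * H0 j k + 1 * H1 j k) s :=
      (((hasDerivAt_id s).const_sub 1).mul_const _).add ((hasDerivAt_id s).mul_const _)
    have h2 : (fun u : ℝ => (1 - u) * H0 j k + u * H1 j k) = fun u => H u j k := by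
      funext u; simp [hHdef u, Matrix.add_apply, Matrix.smul_apply, smul_eq_mul]
    rw [h2] at h
    convert h using 1
    simp [Matrix.sub_apply]; ring
  -- derivative of orthonormality
  have horth' : ∀ (s : ℝ) (i j : Fin n),
      v' i s ⬝ᵥ v j s + v i s ⬝ᵥ v' j s = 0 := by
    intro s i j
    have h1 : HasDerivAt (fun u => v i u ⬝ᵥ v j u) (v' i s ⬝ᵥ v j s + v i s ⬝ᵥ v' j s) s :=
      hasDerivAt_dot (hv i s) (hv j s)
    have h2 : HasDerivAt (fun u => v i u ⬝ᵥ v j u) 0 s := by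
      have he : (fun u => v i u ⬝ᵥ v j u) = fun _ => (if i = j then (1:ℝ) else 0) :=
        funext fun u => horth u i j
      rw [he]; exact hasDerivAt_const _ _
    exact h1.unique h2
  have hself : ∀ (s : ℝ) (i : Fin n), v i s ⬝ᵥ v' i s = 0 := by
    intro s i
    have h := horth' s i i
    rw [dotProduct_comm] at h
    linarith
  -- off-diagonal matrix elements of Ḣ at sstar
  have hoffdiag : ∀ (i j : Fin n), j ≠ i →
      v j sstar ⬝ᵥ ((H1 - H0) *ᵥ v i sstar)
        = (lam i sstar - lam j sstar) * (v j sstar ⬝ᵥ v' i sstar) := by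
    intro i j hne
    have h1 : HasDerivAt (fun u => v j u ⬝ᵥ (H u *ᵥ v i u))
        (v' j sstar ⬝ᵥ (H sstar *ᵥ v i sstar)
          + v j sstar ⬝ᵥ ((H1 - H0) *ᵥ v i sstar + H sstar *ᵥ v' i sstar)) sstar :=
      hasDerivAt_dot (hv j sstar) (hasDerivAt_mulVec (fun a b => hent sstar a b) (hv i sstar))
    have h2 : HasDerivAt (fun u => v j u ⬝ᵥ (H u *ᵥ v i u)) 0 sstar := by
      have he : (fun u => v j u ⬝ᵥ (H u *ᵥ v i u)) = fun _ => (0:ℝ) := by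
        funext u
        rw [heig i u, dotProduct_smul, horth u j i, if_neg hne]
        simp
      rw [he]; exact hasDerivAt_const _ _
    have h0 := h1.unique h2
    have e1 : v' j sstar ⬝ᵥ (H sstar *ᵥ v i sstar)
        = lam i sstar * (v' j sstar ⬝ᵥ v i sstar) := by
      rw [heig i sstar, dotProduct_smul, smul_eq_mul]
    have e2 : v j sstar ⬝ᵥ (H sstar *ᵥ v' i sstar)
        = lam j sstar * (v j sstar ⬝ᵥ v' i sstar) := by
      rw [symm_dot (hHsymm sstar), heig j sstar, smul_dotProduct, smul_eq_mul]
    have e3 : v' j sstar ⬝ᵥ v i sstar = -(v j sstar ⬝ᵥ v' i sstar) := by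
      have := horth' sstar j i
      linarith
    rw [dotProduct_add, e1, e2, e3] at h0
    linarith [h0]
  -- Hellmann–Feynman: lam' i s = ⟨v i|Ḣ|v i⟩ for every s
  have hlamderiv : ∀ (i : Fin n) (s : ℝ),
      lam' i s = v i s ⬝ᵥ ((H1 - H0) *ᵥ v i s) := by
    intro i s
    have h1 : HasDerivAt (fun u => v i u ⬝ᵥ (H u *ᵥ v i u))
        (v' i s ⬝ᵥ (H s *ᵥ v i s)
          + v i s ⬝ᵥ ((H1 - H0) *ᵥ v i s + H s *ᵥ v' i s)) s :=
      hasDerivAt_dot (hv i s) (hasDerivAt_mulVec (fun a b => hent s a b) (hv i s))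
    have he : (fun u => v i u ⬝ᵥ (H u *ᵥ v i u)) = lam i := by
      funext u
      rw [heig i u, dotProduct_smul, horth u i i, if_pos rfl]
      simp
    rw [he] at h1
    have h0 := (hlam i s).unique h1
    have e1 : v' i s ⬝ᵥ (H s *ᵥ v i s) = 0 := by
      rw [heig i s, dotProduct_smul, smul_eq_mul]
      have h' : v' i s ⬝ᵥ v i s = 0 := by
        rw [dotProduct_comm]; exact hself s i
      rw [h']; ring
    have e2 : v i s ⬝ᵥ (H s *ᵥ v' i s) = 0 := by
      rw [symm_dot (hHsymm s), heig i s, smul_dotProduct, smul_eq_mul,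
        hself s i]
      ring
    rw [dotProduct_add, e1, e2] at h0
    linarith [h0]
  -- second derivative at sstar
  have hlam2 : ∀ i : Fin n,
      lam'' i = 2 * (v' i sstar ⬝ᵥ ((H1 - H0) *ᵥ v i sstar)) := by
    intro i
    have h1 : HasDerivAt (fun u => v i u ⬝ᵥ ((H1 - H0) *ᵥ v i u))
        (v' i sstar ⬝ᵥ ((H1 - H0) *ᵥ v i sstar)
          + v i sstar ⬝ᵥ ((0 : Matrix (Fin n) (Fin n) ℝ) *ᵥ v i sstar
              + (H1 - H0) *ᵥ v' i sstar)) sstar :=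
      hasDerivAt_dot (hv i sstar)
        (hasDerivAt_mulVec (fun a b => hasDerivAt_const sstar _) (hv i sstar))
    have he : (fun u => v i u ⬝ᵥ ((H1 - H0) *ᵥ v i u)) = lam' i := by
      funext u; rw [hlamderiv i u]
    rw [he] at h1
    have h0 := (hlam'' i).unique h1
    have e2 : v i sstar ⬝ᵥ ((H1 - H0) *ᵥ v' i sstar)
        = v' i sstar ⬝ᵥ ((H1 - H0) *ᵥ v i sstar) := by
      rw [symm_dot hHds, dotProduct_comm]
    rw [Matrix.zero_mulVec, zero_add, e2] at h0
    linarith [h0]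
  -- completeness of the eigenbasis at sstar
  have hcomplete : ∀ (w : Fin n → ℝ) (k : Fin n),
      w k = ∑ j, (v j sstar ⬝ᵥ w) * v j sstar k := by
    intro w k
    set V : Matrix (Fin n) (Fin n) ℝ := Matrix.of (fun i k => v i sstar k) with hV
    have hVVt : V * Vᵀ = 1 := by
      ext i j
      simpa [Matrix.mul_apply, Matrix.transpose_apply, hV, Matrix.one_apply,
        dotProduct] using horth sstar i j
    have hVtV : Vᵀ * V = 1 := mul_eq_one_comm.mp hVVt
    have h := congrFun (by rw [Matrix.mulVec_mulVec, hVtV, Matrix.one_mulVec] :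
      Vᵀ *ᵥ (V *ᵥ w) = w) k
    rw [← h]
    simp only [Matrix.mulVec, dotProduct, Matrix.transpose_apply, hV, Matrix.of_apply]
    exact Finset.sum_congr rfl fun j _ => by ring
  -- Parseval identity
  have parseval : ∀ x y : Fin n → ℝ,
      x ⬝ᵥ y = ∑ j, (v j sstar ⬝ᵥ x) * (v j sstar ⬝ᵥ y) := by
    intro x y
    calc x ⬝ᵥ y = ∑ k, x k * y k := rfl
      _ = ∑ k, (∑ j, (v j sstar ⬝ᵥ x) * v j sstar k) * y k :=
          Finset.sum_congr rfl fun k _ => by rw [← hcomplete x k]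
      _ = ∑ k, ∑ j, (v j sstar ⬝ᵥ x) * v j sstar k * y k :=
          Finset.sum_congr rfl fun k _ => Finset.sum_mul ..
      _ = ∑ j, ∑ k, (v j sstar ⬝ᵥ x) * v j sstar k * y k := Finset.sum_comm
      _ = ∑ j, (v j sstar ⬝ᵥ x) * (v j sstar ⬝ᵥ y) := by
          refine Finset.sum_congr rfl fun j _ => ?_
          simp only [dotProduct, Finset.mul_sum]
          exact Finset.sum_congr rfl fun k _ => by ring
  -- second derivative as a spectral sum
  have hsumform : ∀ i : Fin n,
      lam'' i = 2 * ∑ j, (lam i sstar - lam j sstar) * (v j sstar ⬝ᵥ v' i sstar) ^ 2 := by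
    intro i
    rw [hlam2 i, parseval]
    congr 1
    refine Finset.sum_congr rfl fun j _ => ?_
    by_cases hj : j = i
    · subst hj
      have h' : v j sstar ⬝ᵥ v' j sstar = 0 := hself sstar j
      rw [h']; ring
    · rw [hoffdiag i j hj]; ring
  -- the two distinguished overlap coefficients
  have hne10 : lam i1 sstar - lam i0 sstar ≠ 0 := ne_of_gt (by linarith)
  have hm : v i1 sstar ⬝ᵥ ((H1 - H0) *ᵥ v i0 sstar)
      = v i0 sstar ⬝ᵥ ((H1 - H0) *ᵥ v i1 sstar) := by
    rw [symm_dot hHds, dotProduct_comm]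
  have hc10 : v i0 sstar ⬝ᵥ v' i1 sstar = β := by
    have h := hoffdiag i1 i0 h01
    rw [hβ, h]
    field_simp
  have hc01 : v i1 sstar ⬝ᵥ v' i0 sstar = -β := by
    have h := hoffdiag i0 i1 (Ne.symm h01)
    rw [hβ, ← hm, h]
    field_simp
    ring
  -- the combined spectral sum vanishes
  set F : Fin n → ℝ := fun j =>
    (lam i0 sstar - lam j sstar) * (v j sstar ⬝ᵥ v' i0 sstar) ^ 2
      + (lam i1 sstar - lam j sstar) * (v j sstar ⬝ᵥ v' i1 sstar) ^ 2 with hF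
  have hFsum : ∑ j, F j = 0 := by
    have h0 := hsumform i0
    have h1 := hsumform i1
    have hs : ∑ j, F j
        = (∑ j, (lam i0 sstar - lam j sstar) * (v j sstar ⬝ᵥ v' i0 sstar) ^ 2)
          + (∑ j, (lam i1 sstar - lam j sstar) * (v j sstar ⬝ᵥ v' i1 sstar) ^ 2) :=
      Finset.sum_add_distrib
    rw [hs]; linarith
  -- all other overlaps vanish
  have hother : ∀ j, j ≠ i0 → j ≠ i1 →
      v j sstar ⬝ᵥ v' i0 sstar = 0 ∧ v j sstar ⬝ᵥ v' i1 sstar = 0 := by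
    have hi1mem : i1 ∈ Finset.univ.erase i0 :=
      Finset.mem_erase.mpr ⟨Ne.symm h01, Finset.mem_univ _⟩
    have e1 : ∑ j, F j = F i0 + ∑ j ∈ Finset.univ.erase i0, F j :=
      (Finset.add_sum_erase _ F (Finset.mem_univ i0)).symm
    have e2 : ∑ j ∈ Finset.univ.erase i0, F j
        = F i1 + ∑ j ∈ (Finset.univ.erase i0).erase i1, F j :=
      (Finset.add_sum_erase _ F hi1mem).symm
    have hF01 : F i0 + F i1 = 0 := by
      simp only [hF]
      rw [hc10, hc01]
      ring
    have hTsum : ∑ j ∈ (Finset.univ.erase i0).erase i1, F j = 0 := by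
      rw [e1, e2] at hFsum; linarith
    have hnonpos : ∀ j ∈ (Finset.univ.erase i0).erase i1, F j ≤ 0 := by
      intro j hj
      obtain ⟨hj1, hj0⟩ : j ≠ i1 ∧ j ≠ i0 := by
        simpa [Finset.mem_erase] using hj
      have hgt := hhigh j hj0 hj1
      have h0j : lam i0 sstar - lam j sstar < 0 := by linarith
      have h1j : lam i1 sstar - lam j sstar < 0 := by linarith
      have hq0 := sq_nonneg (v j sstar ⬝ᵥ v' i0 sstar)
      have hq1 := sq_nonneg (v j sstar ⬝ᵥ v' i1 sstar)
      simp only [hF]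
      nlinarith [mul_nonneg (neg_nonneg.2 h0j.le) hq0,
        mul_nonneg (neg_nonneg.2 h1j.le) hq1]
    have hzero := (Finset.sum_eq_zero_iff_of_nonpos hnonpos).mp hTsum
    intro j hj0 hj1
    have hjT : j ∈ (Finset.univ.erase i0).erase i1 := by
      simp [Finset.mem_erase, hj0, hj1]
    have hFj : F j = 0 := hzero j hjT
    have hgt := hhigh j hj0 hj1
    have h0j : lam i0 sstar - lam j sstar < 0 := by linarith
    have h1j : lam i1 sstar - lam j sstar < 0 := by linarith
    have hq0 := sq_nonneg (v j sstar ⬝ᵥ v' i0 sstar)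
    have hq1 := sq_nonneg (v j sstar ⬝ᵥ v' i1 sstar)
    simp only [hF] at hFj
    have t0le : (lam i0 sstar - lam j sstar) * (v j sstar ⬝ᵥ v' i0 sstar) ^ 2 ≤ 0 := by
      nlinarith [mul_nonneg (neg_nonneg.2 h0j.le) hq0]
    have t1le : (lam i1 sstar - lam j sstar) * (v j sstar ⬝ᵥ v' i1 sstar) ^ 2 ≤ 0 := by
      nlinarith [mul_nonneg (neg_nonneg.2 h1j.le) hq1]
    have t0eq : (lam i0 sstar - lam j sstar) * (v j sstar ⬝ᵥ v' i0 sstar) ^ 2 = 0 := by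
      linarith
    have t1eq : (lam i1 sstar - lam j sstar) * (v j sstar ⬝ᵥ v' i1 sstar) ^ 2 = 0 := by
      linarith
    constructor
    · have hsq := (mul_eq_zero.mp t0eq).resolve_left (ne_of_lt h0j)
      exact pow_eq_zero_iff two_ne_zero |>.mp hsq
    · have hsq := (mul_eq_zero.mp t1eq).resolve_left (ne_of_lt h1j)
      exact pow_eq_zero_iff two_ne_zero |>.mp hsq
  -- assemble the conclusion
  constructor
  · funext k
    rw [hcomplete (v' i0 sstar) k, Finset.sum_eq_single i1]
    · rw [hc01]
      simp [Pi.smul_apply, smul_eq_mul]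
    · intro b _ hb
      by_cases hb0 : b = i0
      · rw [hb0, hself sstar i0, zero_mul]
      · rw [(hother b hb0 hb).1, zero_mul]
    · intro h; exact absurd (Finset.mem_univ i1) h
  · funext k
    rw [hcomplete (v' i1 sstar) k, Finset.sum_eq_single i0]
    · rw [hc10]
      simp [Pi.smul_apply, smul_eq_mul]
    · intro b _ hb
      by_cases hb1 : b = i1
      · rw [hb1, hself sstar i1, zero_mul]
      · rw [(hother b hb hb1).2, zero_mul]
    · intro h; exact absurd (Finset.mem_univ i0) h
end
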